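/- arXiv:2111.04049 — 4 statements merged into one kernel-verified Lean document; each statement's English description precedes it below -/
import Mathlib

section
/- Let q ≥ 2 be an integer and c : ℕ → ℝ a sequence with c_0 = 1 and c_n ≠ 0 for all n. Define d : ℕ → ℝ by d_{qn+i} = c_n for 0 ≤ i < q, and the weight w(N,M) = d_M·d_{N−M}/d_N if N mod q ≥ M mod q and w(N,M) = 0 otherwise; let ∘ be the corresponding convolution and log_∘ the corresponding ∘-logarithm. Then for all real formal power series a, b with constant term 1: log_∘([b]_q · a(x^q)) = [log b]_q + g, where [f]_q = Σ_{n=0}^{q−1} f_n x^n, log b is the ordinary power series logarithm, · is the ordinary product, a(x^q) is substitution of x^q, and g is the series with g_N = 0 whenever q does not divide N and g_{qn} = (1/c_n) · [y^n] log(Σ_{k≥0} a_k c_k y^k). -/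
open PowerSeries Finset

/-- Convolution of formal power series with respect to a weight `w`. -/
noncomputable def conv (w : ℕ → ℕ → ℝ) (a b : PowerSeries ℝ) : PowerSeries ℝ :=
  PowerSeries.mk fun n => ∑ m ∈ Finset.range (n + 1), w n m * coeff m a * coeff (n - m) b

/-- Iterated `∘`-power `f^{(k)}` with respect to a weight `w`. -/
noncomputable def convPow (w : ℕ → ℕ → ℝ) (f : PowerSeries ℝ) : ℕ → PowerSeries ℝ
  | 0 => 1
  | k + 1 => conv w f (convPow w f k)

/-- The `∘`-logarithm `log_∘ f = Σ_{n≥1} ((−1)^{n−1}/n)·(f−1)^{(n)}`. -/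
noncomputable def convLog (w : ℕ → ℕ → ℝ) (f : PowerSeries ℝ) : PowerSeries ℝ :=
  PowerSeries.mk fun N =>
    ∑ n ∈ Finset.Icc 1 N, ((-1 : ℝ) ^ (n - 1) / n) * coeff N (convPow w (f - 1) n)

/-- The ordinary formal power series logarithm. -/
noncomputable def logSeries (f : PowerSeries ℝ) : PowerSeries ℝ :=
  PowerSeries.mk fun N =>
    ∑ n ∈ Finset.Icc 1 N, ((-1 : ℝ) ^ (n - 1) / n) * coeff N ((f - 1) ^ n)

/-- Truncation below degree `q`: `[f]_q = Σ_{n<q} f_n x^n`. -/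
noncomputable def truncQ (q : ℕ) (f : PowerSeries ℝ) : PowerSeries ℝ :=
  PowerSeries.mk fun n => if n < q then coeff n f else 0

/-- Substitution of `x^q` for `x`. -/
noncomputable def substPow (q : ℕ) (f : PowerSeries ℝ) : PowerSeries ℝ :=
  PowerSeries.mk fun n => if q ∣ n then coeff (n / q) f else 0

/-!
Cut a series into blocks of length `q` and read the `n`-th block, scaled by `c n`, in the ring
`ℝ[X]/(X^q)`. This is an injective linear map `Φ : ℝ⟦x⟧ → (ℝ[X]/(X^q))⟦y⟧` turning the
convolution `∘` into the ordinary product, so `Φ (log_∘ F)` is the logarithm of `Φ F`. Now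
`Φ ([b]_q · a(x^q)) = b̄ · ∑ a_k c_k y^k`, where the constant `b̄`, the class of `b`, is `1` plus a
nilpotent. The logarithm of this product is the logarithm of the constant `b̄`, the image of
`[log b]_q`, plus the logarithm of `∑ a_k c_k y^k`, the image of the series `g`. Since the
constant term of `Φ F` is only unipotent, its logarithm needs the sum over `k` to run up to
`n + q` at the `n`-th coefficient; additivity is proved by differentiating in `y`.
-/

noncomputable section

def logCoeff (k : ℕ) : ℝ := (-1) ^ (k - 1) / k

section Log

variable {S : Type*} [CommRing S]

theorem coeff_pow_eq_zero_of_lt {g : S⟦X⟧} (hg : constantCoeff g = 0) {n k : ℕ} (h : n < k) :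
    coeff n (g ^ k) = 0 :=
  coeff_of_lt_order n ((Nat.cast_lt.2 h).trans_le (le_order_pow_of_constantCoeff_eq_zero k hg))

def LogTerminates (q : ℕ) (G : S⟦X⟧) : Prop :=
  ∀ n k, n + q < k → coeff n ((G - 1) ^ k) = 0

theorem logTerminates_of_constantCoeff_eq_one {G : S⟦X⟧} (hG : constantCoeff G = 1) (q : ℕ) :
    LogTerminates q G := fun _ _ h =>
  coeff_pow_eq_zero_of_lt (by rw [map_sub, hG, map_one, sub_self]) (by omega)

theorem logTerminates_C_mul {q : ℕ} {s : S} (hs : (s - 1) ^ (q + 1) = 0) {A : S⟦X⟧}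
    (hA : constantCoeff A = 1) : LogTerminates q (C s * A) := by
  intro n k hk
  have hA1 : constantCoeff (A - 1) = 0 := by rw [map_sub, hA, map_one, sub_self]
  rw [show C s * A - 1 = C (s - 1) + C s * (A - 1) by rw [map_sub, map_one]; ring, add_pow,
    map_sum]
  refine sum_eq_zero fun i _ => ?_
  rcases le_or_gt (q + 1) i with hi | hi
  · rw [← map_pow, pow_eq_zero_of_le hi hs, map_zero, zero_mul, zero_mul, map_zero]
  · have hdvd : X ^ (k - i) ∣ C (s - 1) ^ i * (C s * (A - 1)) ^ (k - i) * (k.choose i : S⟦X⟧) :=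
      (pow_dvd_pow_of_dvd (X_dvd_iff.2 hA1) _).trans
        (Dvd.intro_left (C (s - 1) ^ i * C s ^ (k - i) * (k.choose i : S⟦X⟧))
          (by rw [mul_pow]; ring))
    exact X_pow_dvd_iff.1 hdvd n (by omega)

variable [Algebra ℝ S]

/-- When the constant term of `G` is `1` plus a nilpotent, the `n`-th coefficient of
`∑ (-1)^(k-1)/k (G - 1)^k` need not stop at `k = n`; under `LogTerminates q G` it stops at
`k = n + q`. -/
def logUpTo (q : ℕ) (G : S⟦X⟧) : S⟦X⟧ :=
  mk fun n => ∑ k ∈ Icc 1 (n + q), logCoeff k • coeff n ((G - 1) ^ k)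

theorem coeff_logUpTo {q : ℕ} {G : S⟦X⟧} (hG : LogTerminates q G) {n K : ℕ} (hK : n + q ≤ K) :
    coeff n (logUpTo q G) = coeff n (∑ k ∈ Icc 1 K, logCoeff k • (G - 1) ^ k) := by
  simp only [logUpTo, coeff_mk, map_sum, coeff_smul]
  refine sum_subset (Icc_subset_Icc le_rfl hK) fun k hk hk' => ?_
  simp only [mem_Icc] at hk hk'
  rw [hG n k (by omega), smul_zero]

theorem logUpTo_map {T : Type*} [CommRing T] [Algebra ℝ T] (φ : S →ₐ[ℝ] T) (q : ℕ) (G : S⟦X⟧) :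
    logUpTo q (map (φ : S →+* T) G) = map (φ : S →+* T) (logUpTo q G) := by
  ext n
  simp only [logUpTo, coeff_mk, coeff_map, map_sum, ← map_one (map (φ : S →+* T)), ← map_sub,
    ← map_pow]
  simp

theorem logUpTo_C (q : ℕ) (s : S) :
    logUpTo q (C s) = C (∑ k ∈ Icc 1 q, logCoeff k • (s - 1) ^ k) := by
  ext n
  simp only [logUpTo, coeff_mk, ← map_one C, ← map_sub, ← map_pow, coeff_C]
  split_ifs with hn
  · simp [hn]
  · simp

theorem derivative_sum_logCoeff_smul_pow (u : S⟦X⟧) (K : ℕ) :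
    d⁄dX S (∑ k ∈ Icc 1 K, logCoeff k • u ^ k) = (∑ t ∈ range K, (-u) ^ t) * d⁄dX S u := by
  rw [map_sum, sum_mul, ← Ico_add_one_right_eq_Icc, sum_Ico_eq_sum_range]
  refine sum_congr rfl fun t _ => ?_
  have hcoeff : logCoeff (1 + t) * ((1 + t : ℕ) : ℝ) = (-1) ^ t := by
    rw [logCoeff, Nat.add_sub_cancel_left, div_mul_cancel₀ _ (by positivity)]
  rw [Derivation.map_smul_of_tower, Derivation.leibniz_pow, Nat.add_sub_cancel_left,
    ← Nat.cast_smul_eq_nsmul ℝ, smul_smul, hcoeff, smul_eq_mul (u ^ t), ← smul_mul_assoc,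
    neg_pow u, Algebra.smul_def, map_pow, map_neg, map_one]

theorem constantCoeff_logUpTo (q : ℕ) (G : S⟦X⟧) :
    constantCoeff (logUpTo q G) = ∑ k ∈ Icc 1 q, logCoeff k • (constantCoeff G - 1) ^ k := by
  rw [← coeff_zero_eq_constantCoeff_apply, logUpTo, coeff_mk, zero_add]
  simp only [coeff_zero_eq_constantCoeff_apply, map_pow, map_sub, map_one]

theorem derivative_logUpTo_mul_self {q : ℕ} {G : S⟦X⟧} (hG : LogTerminates q G) :
    d⁄dX S (logUpTo q G) * G = d⁄dX S G := by
  ext n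
  set K := n + q + 1
  set x : S⟦X⟧ := -(G - 1)
  have hlog : ∀ m ≤ n, coeff m (d⁄dX S (logUpTo q G)) =
      coeff m ((∑ t ∈ range K, x ^ t) * d⁄dX S G) := by
    intro m hm
    rw [coeff_derivative, coeff_logUpTo hG (K := K) (by omega), ← coeff_derivative,
      derivative_sum_logCoeff_smul_pow, map_sub, derivative_one, sub_zero]
  have htail : ∀ m ≤ n, coeff m (x ^ K) = 0 := by
    intro m hm
    rw [show x ^ K = (-1) ^ K * (G - 1) ^ K from neg_pow _ _]
    rcases neg_one_pow_eq_or S⟦X⟧ K with h | h <;> simp [h, hG m K (by omega)]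
  have hgeom : (∑ t ∈ range K, x ^ t) * G = 1 - x ^ K := by
    rw [show G = -(x - 1) by simp [x], mul_neg, geom_sum_mul, neg_sub]
  calc coeff n (d⁄dX S (logUpTo q G) * G)
      = coeff n ((∑ t ∈ range K, x ^ t) * d⁄dX S G * G) := by
        rw [coeff_mul, coeff_mul]
        exact sum_congr rfl fun p hp => by rw [hlog p.1 (HasAntidiagonal.antidiagonal.fst_le hp)]
    _ = coeff n (d⁄dX S G) - coeff n (x ^ K * d⁄dX S G) := by
        rw [mul_right_comm, hgeom, sub_mul, one_mul, map_sub]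
    _ = coeff n (d⁄dX S G) := by
        rw [coeff_mul, sub_eq_self]
        exact sum_eq_zero fun p hp => by
          rw [htail p.1 (HasAntidiagonal.antidiagonal.fst_le hp), zero_mul]

theorem logUpTo_C_mul {q : ℕ} {s : S} (hs : (s - 1) ^ (q + 1) = 0) {A : S⟦X⟧}
    (hA : constantCoeff A = 1) : logUpTo q (C s * A) = logUpTo q (C s) + logUpTo q A := by
  let _ : Module ℚ S := Module.compHom S (algebraMap ℚ ℝ)
  have : IsAddTorsionFree S := .of_module_rat S
  have hunit : IsUnit (C s * A) := by
    rw [isUnit_iff_constantCoeff, map_mul, constantCoeff_C, hA, mul_one, ← add_sub_cancel 1 s]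
    exact IsNilpotent.isUnit_one_add ⟨q + 1, hs⟩
  refine derivative.ext (hunit.mul_right_cancel ?_) ?_
  · rw [derivative_logUpTo_mul_self (logTerminates_C_mul hs hA), map_add, logUpTo_C, derivative_C,
      zero_add, Derivation.leibniz, derivative_C, smul_zero, add_zero, smul_eq_mul,
      ← derivative_logUpTo_mul_self (logTerminates_of_constantCoeff_eq_one hA q)]
    ring
  · have hA0 : ∑ k ∈ Icc 1 q, logCoeff k • (constantCoeff A - 1) ^ k = 0 :=
      sum_eq_zero fun k hk => by rw [hA, sub_self, zero_pow (by simp at hk; omega), smul_zero]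
    rw [map_add, constantCoeff_logUpTo, constantCoeff_logUpTo, constantCoeff_logUpTo, hA0,
      add_zero, map_mul, constantCoeff_C, hA, mul_one]

end Log

theorem logSeries_eq_logUpTo {f : ℝ⟦X⟧} (hf : constantCoeff f = 1) (q : ℕ) :
    logSeries f = logUpTo q f := by
  ext n
  rw [show logSeries f = logUpTo 0 f from rfl,
    coeff_logUpTo (logTerminates_of_constantCoeff_eq_one hf 0) (K := n + q) (by omega),
    coeff_logUpTo (logTerminates_of_constantCoeff_eq_one hf q) le_rfl]

abbrev Jet (q : ℕ) := ℝ⟦X⟧ ⧸ Ideal.span {(X : ℝ⟦X⟧) ^ q}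

def jet (q : ℕ) : ℝ⟦X⟧ →ₐ[ℝ] Jet q := Ideal.Quotient.mkₐ ℝ _

theorem jet_eq_jet_iff {q : ℕ} {f g : ℝ⟦X⟧} :
    jet q f = jet q g ↔ ∀ j < q, coeff j f = coeff j g := by
  simp only [jet, Ideal.Quotient.mkₐ_eq_mk, Ideal.Quotient.mk_eq_mk_iff_sub_mem,
    Ideal.mem_span_singleton, X_pow_dvd_iff, map_sub, sub_eq_zero]

theorem jet_pow_eq_zero {q k : ℕ} {f : ℝ⟦X⟧} (hf : constantCoeff f = 0) (hk : q ≤ k) :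
    jet q f ^ k = 0 := by
  rw [← map_pow, ← map_zero (jet q), jet_eq_jet_iff]
  intro j hj
  rw [coeff_pow_eq_zero_of_lt hf (by omega), map_zero]

theorem jet_logSeries (q : ℕ) {b : ℝ⟦X⟧} (hb : constantCoeff b = 1) :
    jet q (logSeries b) = ∑ k ∈ Icc 1 q, logCoeff k • (jet q b - 1) ^ k := by
  simp only [← map_one (jet q), ← map_sub, ← map_pow, ← map_smul, ← map_sum]
  refine jet_eq_jet_iff.2 fun j hj => ?_
  rw [show logSeries b = logUpTo 0 b from rfl,
    coeff_logUpTo (logTerminates_of_constantCoeff_eq_one hb 0) (K := q) (by omega)]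

theorem mul_add_div_of_lt {q m i : ℕ} (hi : i < q) : (q * m + i) / q = m := by
  rw [Nat.mul_add_div (by omega), Nat.div_eq_of_lt hi, add_zero]

theorem sum_range_filter_mod_le {M : Type*} [AddCommMonoid M] {q n j : ℕ} (hj : j < q)
    (h : ℕ → M) :
    ∑ m ∈ range (q * n + j + 1) with m % q ≤ j, h m =
      ∑ m ∈ range (n + 1), ∑ i ∈ range (j + 1), h (q * m + i) := by
  rw [← sum_product']
  refine sum_nbij' (fun m => (m / q, m % q)) (fun p => q * p.1 + p.2) ?_ ?_
    (fun m _ => Nat.div_add_mod m q) ?_ (fun m _ => by rw [Nat.div_add_mod])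
  · intro m hm
    simp only [mem_filter, mem_range, mem_product] at hm ⊢
    refine ⟨(Nat.div_lt_iff_lt_mul (by omega)).2 ?_, by omega⟩
    rw [add_mul, one_mul, mul_comm]
    omega
  · intro p hp
    simp only [mem_range, mem_product] at hp
    have : q * p.1 ≤ q * n := Nat.mul_le_mul_left q (by omega)
    simp only [mem_filter, mem_range, Nat.mul_add_mod, Nat.mod_eq_of_lt (by omega : p.2 < q)]
    omega
  · intro p hp
    simp only [mem_range, mem_product] at hp
    rw [mul_add_div_of_lt (by omega), Nat.mul_add_mod, Nat.mod_eq_of_lt (by omega)]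

def block (q : ℕ) (f : ℝ⟦X⟧) (n : ℕ) : ℝ⟦X⟧ :=
  mk fun j => coeff (q * n + j) f

@[simp]
theorem coeff_block (q : ℕ) (f : ℝ⟦X⟧) (n j : ℕ) : coeff j (block q f n) = coeff (q * n + j) f :=
  coeff_mk _ _

/-- Reading the blocks in `ℝ[X]/(X^q)` turns `∘` into the ordinary product: the weight vanishes
when `M % q > N % q`, i.e. exactly when adding positions inside blocks carries into the next block,
which is what `X^q = 0` discards. -/
def blockMap (q : ℕ) (c : ℕ → ℝ) : ℝ⟦X⟧ →ₗ[ℝ] (Jet q)⟦X⟧ where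
  toFun f := mk fun n => jet q (c n • block q f n)
  map_add' f g := by
    ext n
    have : block q (f + g) n = block q f n + block q g n := by ext j; simp
    simp only [coeff_mk, map_add, this, smul_add]
  map_smul' r f := by
    ext n
    have : block q (r • f) n = r • block q f n := by ext j; simp
    simp only [coeff_mk, coeff_smul, RingHom.id_apply, this, smul_comm r, map_smul]

theorem coeff_blockMap (q : ℕ) (c : ℕ → ℝ) (f : ℝ⟦X⟧) (n : ℕ) :
    coeff n (blockMap q c f) = jet q (c n • block q f n) :=
  coeff_mk n fun n => jet q (c n • block q f n)

section BlockMap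

variable {q : ℕ} {c : ℕ → ℝ}

theorem blockMap_injective (hq : 0 < q) (hc : ∀ n, c n ≠ 0) :
    Function.Injective (blockMap q c) := by
  intro f g hfg
  ext N
  have h := jet_eq_jet_iff.1 (by simpa only [coeff_blockMap] using congrArg (coeff (N / q)) hfg)
    (N % q) (Nat.mod_lt N hq)
  simp only [coeff_smul, coeff_block, smul_eq_mul, Nat.div_add_mod] at h
  exact mul_left_cancel₀ (hc _) h

theorem blockMap_one (hc0 : c 0 = 1) : blockMap q c 1 = 1 := by
  ext n
  rw [coeff_blockMap, coeff_one]
  split_ifs with hn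
  · subst hn
    rw [hc0, one_smul, ← map_one (jet q), jet_eq_jet_iff]
    simp
  · rw [← map_zero (jet q), jet_eq_jet_iff]
    intro j hj
    have : q ≤ q * n := Nat.le_mul_of_pos_right q (by omega)
    rw [coeff_smul, coeff_block, coeff_one, if_neg (by omega), smul_zero, map_zero]

-- `d_M d_{N-M} / d_N` with `d_{qn+i} = c n`, cut off when `M % q > N % q`
def blockWeight (q : ℕ) (c : ℕ → ℝ) (N M : ℕ) : ℝ :=
  if M % q ≤ N % q then c (M / q) * c ((N - M) / q) / c (N / q) else 0

theorem coeff_conv_blockWeight (hc : ∀ n, c n ≠ 0) (f g : ℝ⟦X⟧) {n j : ℕ} (hj : j < q) :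
    c n * coeff (q * n + j) (conv (blockWeight q c) f g) =
      ∑ m ∈ range (n + 1), ∑ i ∈ range (j + 1),
        (c m * coeff (q * m + i) f) * (c (n - m) * coeff (q * (n - m) + (j - i)) g) := by
  have hmod : (q * n + j) % q = j := by rw [Nat.mul_add_mod, Nat.mod_eq_of_lt hj]
  calc c n * coeff (q * n + j) (conv (blockWeight q c) f g)
      = ∑ M ∈ range (q * n + j + 1) with M % q ≤ j,
          c (M / q) * c ((q * n + j - M) / q) * coeff M f * coeff (q * n + j - M) g := by
        rw [conv, coeff_mk, mul_sum, sum_filter]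
        refine sum_congr rfl fun M _ => ?_
        rw [blockWeight, hmod, mul_add_div_of_lt hj]
        split_ifs
        · field_simp [hc n]
        · simp
    _ = _ := by
        rw [sum_range_filter_mod_le hj]
        refine sum_congr rfl fun m hm => sum_congr rfl fun i hi => ?_
        simp only [mem_range] at hm hi
        have : q * m ≤ q * n := Nat.mul_le_mul_left q (by omega)
        have hsub : q * n + j - (q * m + i) = q * (n - m) + (j - i) := by
          rw [Nat.mul_sub]
          omega
        rw [hsub, mul_add_div_of_lt (by omega), mul_add_div_of_lt (by omega)]
        ring

theorem blockMap_conv (hc : ∀ n, c n ≠ 0) (f g : ℝ⟦X⟧) :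
    blockMap q c (conv (blockWeight q c) f g) = blockMap q c f * blockMap q c g := by
  ext n
  simp only [coeff_mul, coeff_blockMap, ← map_mul, ← map_sum]
  refine jet_eq_jet_iff.2 fun j hj => ?_
  rw [coeff_smul, coeff_block, smul_eq_mul, coeff_conv_blockWeight hc f g hj, map_sum,
    Nat.sum_antidiagonal_eq_sum_range_succ_mk]
  refine sum_congr rfl fun m _ => ?_
  rw [coeff_mul, Nat.sum_antidiagonal_eq_sum_range_succ_mk]
  simp

theorem blockMap_convPow (hc0 : c 0 = 1) (hc : ∀ n, c n ≠ 0) (f : ℝ⟦X⟧) (k : ℕ) :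
    blockMap q c (convPow (blockWeight q c) f k) = blockMap q c f ^ k := by
  induction k with
  | zero => exact blockMap_one hc0
  | succ k ih => rw [convPow, blockMap_conv hc, ih, pow_succ']

theorem coeff_convPow_of_lt (w : ℕ → ℕ → ℝ) {g : ℝ⟦X⟧} (hg : constantCoeff g = 0) {N k : ℕ}
    (h : N < k) : coeff N (convPow w g k) = 0 := by
  induction k generalizing N with
  | zero => omega
  | succ k ih =>
    rw [convPow, conv, coeff_mk]
    refine sum_eq_zero fun m hm => ?_
    rcases Nat.eq_zero_or_pos m with rfl | hm0
    · rw [coeff_zero_eq_constantCoeff_apply, hg, mul_zero, zero_mul]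
    · rw [ih (by simp at hm; omega), mul_zero]

theorem coeff_convLog (w : ℕ → ℕ → ℝ) {F : ℝ⟦X⟧} (hF : constantCoeff F = 1) {N K : ℕ}
    (hK : N ≤ K) :
    coeff N (convLog w F) = coeff N (∑ k ∈ Icc 1 K, logCoeff k • convPow w (F - 1) k) := by
  simp only [convLog, coeff_mk, map_sum, coeff_smul, smul_eq_mul]
  refine sum_subset (Icc_subset_Icc le_rfl hK) fun k hk hk' => ?_
  simp only [mem_Icc] at hk hk'
  rw [coeff_convPow_of_lt w (by rw [map_sub, hF, map_one, sub_self]) (by omega), mul_zero]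

theorem blockMap_convLog (hq : 0 < q) (hc0 : c 0 = 1) (hc : ∀ n, c n ≠ 0) {F : ℝ⟦X⟧}
    (hF : constantCoeff F = 1) (hlog : LogTerminates q (blockMap q c F)) :
    blockMap q c (convLog (blockWeight q c) F) = logUpTo q (blockMap q c F) := by
  ext n
  set K := q * n + q
  have htrunc : coeff n (blockMap q c (convLog (blockWeight q c) F)) =
      coeff n (blockMap q c (∑ k ∈ Icc 1 K, logCoeff k • convPow (blockWeight q c) (F - 1) k)) := by
    simp only [coeff_blockMap]
    refine jet_eq_jet_iff.2 fun j hj => ?_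
    rw [coeff_smul, coeff_smul, coeff_block, coeff_block, coeff_convLog _ hF (K := K) (by omega)]
  have hK : n + q ≤ K := by have := Nat.le_mul_of_pos_left n hq; omega
  rw [htrunc, coeff_logUpTo hlog hK, map_sum]
  simp only [map_smul, blockMap_convPow hc0 hc, map_sub, blockMap_one hc0]

theorem coeff_truncQ_mul_substPow (a b : ℝ⟦X⟧) {n j : ℕ} (hj : j < q) :
    coeff (q * n + j) (truncQ q b * substPow q a) = coeff j b * coeff n a := by
  rw [coeff_mul, sum_eq_single (j, q * n)]
  · simp [truncQ, substPow, hj, Nat.mul_div_cancel_left n (by omega : 0 < q)]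
  · rintro ⟨i, M⟩ hp hne
    rw [HasAntidiagonal.mem_antidiagonal] at hp
    simp only [truncQ, substPow, coeff_mk]
    split_ifs with hi hM
    · obtain ⟨t, rfl⟩ := hM
      have ht : t = n := by
        rw [← mul_add_div_of_lt (m := t) hi, ← mul_add_div_of_lt (m := n) hj, ← hp, add_comm]
      subst ht
      simp only at hp
      exact absurd (by rw [show i = j by omega]) hne
    all_goals simp
  · exact fun h => absurd (HasAntidiagonal.mem_antidiagonal.2 (add_comm _ _)) h

theorem blockMap_truncQ_mul_substPow (a b : ℝ⟦X⟧) :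
    blockMap q c (truncQ q b * substPow q a) =
      C (jet q b) * map (algebraMap ℝ (Jet q)) (mk fun k => coeff k a * c k) := by
  ext n
  rw [coeff_blockMap, coeff_C_mul, coeff_map, coeff_mk, mul_comm (jet q b), ← Algebra.smul_def,
    ← map_smul]
  refine jet_eq_jet_iff.2 fun j hj => ?_
  rw [coeff_smul, coeff_smul, coeff_block, coeff_truncQ_mul_substPow a b hj, smul_eq_mul,
    smul_eq_mul]
  ring

theorem blockMap_truncQ (hc0 : c 0 = 1) (f : ℝ⟦X⟧) : blockMap q c (truncQ q f) = C (jet q f) := by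
  ext n
  rw [coeff_blockMap, coeff_C]
  split_ifs with hn
  · subst hn
    refine jet_eq_jet_iff.2 fun j hj => ?_
    simp [truncQ, hc0, hj]
  · rw [← map_zero (jet q)]
    refine jet_eq_jet_iff.2 fun j hj => ?_
    have : q ≤ q * n := Nat.le_mul_of_pos_right q (by omega)
    simp [truncQ, show ¬q * n + j < q by omega]

theorem blockMap_mk_ite_dvd (hc : ∀ n, c n ≠ 0) (h : ℝ⟦X⟧) :
    blockMap q c (mk fun N => if q ∣ N then 1 / c (N / q) * coeff (N / q) h else 0) =
      map (algebraMap ℝ (Jet q)) h := by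
  ext n
  rw [coeff_blockMap, coeff_map, ← AlgHom.commutes (jet q)]
  refine jet_eq_jet_iff.2 fun j hj => ?_
  rw [coeff_smul, coeff_block, coeff_mk, Algebra.algebraMap_eq_smul_one, coeff_smul, coeff_one]
  by_cases hj0 : j = 0
  · subst hj0
    simp [Nat.mul_div_cancel_left n (by omega : 0 < q), hc n]
  · have : ¬q ∣ q * n + j := fun hdvd =>
      hj0 (Nat.eq_zero_of_dvd_of_lt ((Nat.dvd_add_right (dvd_mul_right q n)).1 hdvd) hj)
    simp [hj0, this]

end BlockMap

end

/-- The `∘`-logarithm of `[b]_q · a(x^q)` for the weight `w(N,M) = d_M d_{N−M}/d_N`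
(when `N % q ≥ M % q`, else `0`), where `d_{qn+i} = c_n` for `0 ≤ i < q`. -/
theorem stmt4 (q : ℕ) (hq : 2 ≤ q) (c : ℕ → ℝ) (hc0 : c 0 = 1) (hc : ∀ n, c n ≠ 0)
    (a b : PowerSeries ℝ) (ha : constantCoeff a = 1) (hb : constantCoeff b = 1) :
    convLog
        (fun N M => if M % q ≤ N % q then c (M / q) * c ((N - M) / q) / c (N / q) else 0)
        (truncQ q b * substPow q a) =
      truncQ q (logSeries b) +
        PowerSeries.mk (fun N =>
          if q ∣ N then
            (1 / c (N / q)) *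
              coeff (N / q) (logSeries (PowerSeries.mk fun k => coeff k a * c k))
          else 0) := by
  have hq0 : 0 < q := by omega
  set A : ℝ⟦X⟧ := PowerSeries.mk fun k => coeff k a * c k
  have hA : constantCoeff A = 1 := by
    rw [← coeff_zero_eq_constantCoeff_apply, coeff_mk, coeff_zero_eq_constantCoeff_apply, ha, hc0,
      one_mul]
  have hAJet : constantCoeff (map (algebraMap ℝ (Jet q)) A) = 1 := by
    rw [← coeff_zero_eq_constantCoeff_apply, coeff_map, coeff_zero_eq_constantCoeff_apply, hA,
      map_one]
  have hbJet : (jet q b - 1) ^ (q + 1) = 0 := by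
    rw [← map_one (jet q), ← map_sub]
    exact jet_pow_eq_zero (by rw [map_sub, hb, map_one, sub_self]) (by omega)
  have hF : constantCoeff (truncQ q b * substPow q a) = 1 := by
    rw [← coeff_zero_eq_constantCoeff_apply, ← mul_zero q, ← add_zero (q * 0),
      coeff_truncQ_mul_substPow a b hq0, coeff_zero_eq_constantCoeff_apply,
      coeff_zero_eq_constantCoeff_apply, ha, hb, one_mul]
  have hΦF := blockMap_truncQ_mul_substPow (q := q) (c := c) a b
  apply blockMap_injective hq0 hc
  change blockMap q c (convLog (blockWeight q c) _) = _
  rw [blockMap_convLog hq0 hc0 hc hF (hΦF ▸ logTerminates_C_mul hbJet hAJet), hΦF,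
    logUpTo_C_mul hbJet hAJet, logUpTo_C, ← jet_logSeries q hb, map_add, blockMap_truncQ hc0,
    blockMap_mk_ite_dvd hc, logSeries_eq_logUpTo hA q]
  exact congrArg _ (logUpTo_map (Algebra.ofId ℝ (Jet q)) q A)
end

section
/- Let q ≥ 2 be an integer and let a, b be q-fractal real formal power series. Then c = a ∘ b (the P_{[0,q]}-convolution) is q-fractal, and for 0 ≤ n < q one has c_n = Σ_{m=0}^n a_m·b_{n−m}. Moreover the ∘-inverse of a q-fractal series is q-fractal; hence the q-fractal series form a group under the P_{[0,q]}-convolution, isomorphic to the group determined by their first q coefficients under ordinary truncated multiplication. -/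
open PowerSeries Finset

open scoped Classical in
/-- The `(N,M)` entry of the generalized Sierpinski matrix `P_{[0,q]}`. -/
noncomputable def Wq (q N M : ℕ) : ℝ :=
  if ∀ r : ℕ, 1 ≤ r → M % q ^ r ≤ N % q ^ r then 1 else 0

/-- A real formal power series is `q`-fractal if `a_0 = 1` and
`a_{qn+i} = a_n·a_i` for all `n ≥ 0` and `0 ≤ i < q`. -/
def IsFractal (q : ℕ) (a : PowerSeries ℝ) : Prop :=
  coeff 0 a = 1 ∧ ∀ n i : ℕ, i < q → coeff (q * n + i) a = coeff n a * coeff i a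

/-!
Write `N = q n + i` and `M = q m + j` with `i, j < q`. Then `W_q(N, M)` is `W_q(n, m)` if `j ≤ i`
and `0` otherwise, so the coefficient of `a ∘ b` at `q n + i` is a double sum over `m ≤ n` and
`j ≤ i` of `W_q(n, m) a_{qm+j} b_{q(n-m)+(i-j)}`, which for fractal `a`, `b` factors as
`(a ∘ b)_n · (a ∘ b)_i`.

For inverses: `∘` is triangular with unit diagonal, so `∘`-inverses are unique. The fractal series
`B` built from the first `q` coefficients of `A` is one: `a ∘ B` is fractal, agrees with `1` on
the first `q` coefficients, and a fractal series is determined by those.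
-/

section

variable {q : ℕ}

lemma mul_add_mod_pow_succ {j : ℕ} (hj : j < q) (m s : ℕ) :
    (q * m + j) % q ^ (s + 1) = q * (m % q ^ s) + j := by
  have hq : 0 < q := by omega
  rw [pow_succ', Nat.mod_mul, Nat.mul_add_mod, Nat.mod_eq_of_lt hj,
    Nat.mul_add_div hq, Nat.div_eq_of_lt hj, add_zero, add_comm]

lemma mul_add_le_mul_add_iff {i j x y : ℕ} (hi : i < q) (hji : j ≤ i) :
    q * x + j ≤ q * y + i ↔ x ≤ y := by
  constructor
  · intro h
    by_contra! hxy
    have : q * (y + 1) ≤ q * x := Nat.mul_le_mul_left q hxy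
    rw [mul_add, mul_one] at this
    omega
  · intro h
    have := Nat.mul_le_mul_left q h
    omega

lemma wq_mul_add_mul_add {i j : ℕ} (hi : i < q) (hj : j < q) (n m : ℕ) :
    Wq q (q * n + i) (q * m + j) = if j ≤ i then Wq q n m else 0 := by
  have digits_iff : (∀ r, 1 ≤ r → (q * m + j) % q ^ r ≤ (q * n + i) % q ^ r) ↔
      j ≤ i ∧ ∀ r, 1 ≤ r → m % q ^ r ≤ n % q ^ r := by
    constructor
    · intro h
      have hji : j ≤ i := by
        simpa [Nat.mod_eq_of_lt hi, Nat.mod_eq_of_lt hj] using h 1 le_rfl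
      refine ⟨hji, fun r hr => ?_⟩
      have := h (r + 1) (by omega)
      rwa [mul_add_mod_pow_succ hj, mul_add_mod_pow_succ hi, mul_add_le_mul_add_iff hi hji] at this
    · rintro ⟨hji, h⟩ (_ | s) hs
      · omega
      rw [mul_add_mod_pow_succ hj, mul_add_mod_pow_succ hi, mul_add_le_mul_add_iff hi hji]
      rcases s with _ | s
      · simp [Nat.mod_one]
      · exact h _ (by omega)
  classical
  unfold Wq
  rw [if_congr digits_iff rfl rfl]
  by_cases hji : j ≤ i <;> simp [hji]

lemma wq_zero_right (N : ℕ) : Wq q N 0 = 1 := by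
  simp [Wq]

lemma wq_of_lt {i j : ℕ} (hi : i < q) (hj : j < q) :
    Wq q i j = if j ≤ i then 1 else 0 := by
  simpa [wq_zero_right] using wq_mul_add_mul_add hi hj 0 0

theorem Finset.sum_range_mul_eq_sum_sum {M : Type*} [AddCommMonoid M] (g : ℕ → M) (q k : ℕ) :
    ∑ m ∈ range (q * k), g m = ∑ m ∈ range k, ∑ j ∈ range q, g (q * m + j) := by
  induction k with
  | zero => simp
  | succ k ih => rw [mul_add_one, sum_range_add, ih, sum_range_succ]

lemma sum_range_wq_mul {i : ℕ} (hi : i < q) (n : ℕ) (g : ℕ → ℝ) :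
    ∑ m ∈ range (q * n + i + 1), Wq q (q * n + i) m * g m =
      ∑ m ∈ range (n + 1), ∑ j ∈ range (i + 1), Wq q n m * g (q * m + j) := by
  calc _ = ∑ m ∈ range (q * (n + 1)), Wq q (q * n + i) m * g m := by
          refine sum_subset (range_subset_range.2 (by rw [mul_add_one]; omega)) ?_
          intro m hm hm'
          simp only [mem_range, not_lt, mul_add_one] at hm hm'
          obtain ⟨j, rfl⟩ : ∃ j, m = q * n + j := ⟨m - q * n, by omega⟩
          rw [wq_mul_add_mul_add hi (by omega), if_neg (by omega), zero_mul]
    _ = ∑ m ∈ range (n + 1), ∑ j ∈ range q, if j ≤ i then Wq q n m * g (q * m + j) else 0 := by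
          rw [sum_range_mul_eq_sum_sum]
          refine sum_congr rfl fun m _ => sum_congr rfl fun j hj => ?_
          rw [wq_mul_add_mul_add hi (mem_range.1 hj)]
          split_ifs <;> simp
    _ = _ := by
          refine sum_congr rfl fun m _ => ?_
          rw [← sum_filter]
          congr 1
          ext j
          simp only [mem_filter, mem_range]
          omega

@[simp]
lemma coeff_conv (w : ℕ → ℕ → ℝ) (a b : PowerSeries ℝ) (n : ℕ) :
    coeff n (conv w a b) = ∑ m ∈ range (n + 1), w n m * coeff m a * coeff (n - m) b :=
  coeff_mk _ _

lemma coeff_conv_wq_mul_add {i : ℕ} (hi : i < q) (a b : PowerSeries ℝ) (n : ℕ) :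
    coeff (q * n + i) (conv (Wq q) a b) = ∑ m ∈ range (n + 1), ∑ j ∈ range (i + 1),
      Wq q n m * (coeff (q * m + j) a * coeff (q * (n - m) + (i - j)) b) := by
  simp only [coeff_conv, mul_assoc]
  rw [sum_range_wq_mul hi]
  refine sum_congr rfl fun m hm => sum_congr rfl fun j hj => ?_
  have hmn : q * m ≤ q * n := Nat.mul_le_mul_left q (Nat.lt_succ_iff.1 (mem_range.1 hm))
  rw [Nat.mul_sub, show q * n + i - (q * m + j) = q * n - q * m + (i - j) by
    have := mem_range.1 hj; omega]

lemma coeff_conv_wq_of_lt {n : ℕ} (hn : n < q) (a b : PowerSeries ℝ) :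
    coeff n (conv (Wq q) a b) = ∑ m ∈ range (n + 1), coeff m a * coeff (n - m) b := by
  rw [coeff_conv]
  refine sum_congr rfl fun m hm => ?_
  rw [wq_of_lt hn (by have := mem_range.1 hm; omega), if_pos (Nat.lt_succ_iff.1 (mem_range.1 hm)),
    one_mul]

theorem IsFractal.conv_wq {a b : PowerSeries ℝ} (ha : IsFractal q a) (hb : IsFractal q b) :
    IsFractal q (conv (Wq q) a b) := by
  refine ⟨by simp [wq_zero_right, ha.1, hb.1], fun n i hi => ?_⟩
  rw [coeff_conv_wq_mul_add hi, coeff_conv_wq_of_lt hi, coeff_conv, sum_mul_sum]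
  refine sum_congr rfl fun m hm => sum_congr rfl fun j hj => ?_
  have hjq : j < q := by have := mem_range.1 hj; omega
  rw [ha.2 m j hjq, hb.2 _ _ (by omega)]
  ring

theorem IsFractal.ext (hq : 2 ≤ q) {A B : PowerSeries ℝ} (hA : IsFractal q A)
    (hB : IsFractal q B) (h : ∀ k < q, coeff k A = coeff k B) : A = B := by
  ext N
  induction N using Nat.strong_induction_on with
  | _ N ih =>
    rcases lt_or_ge N q with hN | hN
    · exact h N hN
    · have hmod : N % q < q := Nat.mod_lt N (by omega)
      rw [← Nat.div_add_mod N q, hA.2 _ _ hmod, hB.2 _ _ hmod,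
        ih _ (Nat.div_lt_self (by omega) (by omega)), h _ hmod]

theorem isFractal_one : IsFractal q 1 := by
  refine ⟨coeff_zero_one, fun n i hi => ?_⟩
  rcases eq_or_ne n 0 with rfl | hn
  · simp
  · have : q * n ≠ 0 := mul_ne_zero (by omega) hn
    simp [coeff_one, hn, this]

theorem conv_left_cancel {w : ℕ → ℕ → ℝ} (hw : ∀ N, w N 0 = 1) {a A B : PowerSeries ℝ}
    (ha : coeff 0 a = 1) (h : conv w a A = conv w a B) : A = B := by
  ext N
  induction N using Nat.strong_induction_on with
  | _ N ih =>
    have hN := congrArg (coeff N) h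
    simp only [coeff_conv, sum_range_succ', hw, ha, Nat.sub_zero, one_mul] at hN
    have hlower : ∑ m ∈ range N, w N (m + 1) * coeff (m + 1) a * coeff (N - (m + 1)) A =
        ∑ m ∈ range N, w N (m + 1) * coeff (m + 1) a * coeff (N - (m + 1)) B :=
      sum_congr rfl fun m hm => by rw [ih _ (by have := mem_range.1 hm; omega)]
    linarith

noncomputable def fractalExtension (q : ℕ) (f : ℕ → ℝ) : PowerSeries ℝ :=
  mk fun N => ((Nat.digits q N).map f).prod

lemma coeff_fractalExtension_of_lt {f : ℕ → ℝ} (hf : f 0 = 1) {k : ℕ} (hk : k < q) :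
    coeff k (fractalExtension q f) = f k := by
  rcases eq_or_ne k 0 with rfl | hk0
  · simp [fractalExtension, hf]
  · simp [fractalExtension, Nat.digits_of_lt q k hk0 hk]

theorem isFractal_fractalExtension (hq : 2 ≤ q) {f : ℕ → ℝ} (hf : f 0 = 1) :
    IsFractal q (fractalExtension q f) := by
  refine ⟨by simp [fractalExtension], fun n i hi => ?_⟩
  rw [coeff_fractalExtension_of_lt hf hi]
  by_cases h : i ≠ 0 ∨ n ≠ 0
  · simp [fractalExtension, add_comm (q * n), Nat.digits_add q (by omega) i n hi h, mul_comm]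
  · obtain ⟨rfl, rfl⟩ : i = 0 ∧ n = 0 := by tauto
    simp [fractalExtension, hf]

theorem IsFractal.of_conv_wq_eq_one (hq : 2 ≤ q) {a A : PowerSeries ℝ} (ha : IsFractal q a)
    (hA : conv (Wq q) a A = 1) : IsFractal q A := by
  have hA0 : coeff 0 A = 1 := by simpa [wq_zero_right, ha.1] using congrArg (coeff 0) hA
  set B := fractalExtension q (coeff · A)
  have hB : IsFractal q B := isFractal_fractalExtension hq hA0
  have hBinv : conv (Wq q) a B = 1 := by
    refine (ha.conv_wq hB).ext hq isFractal_one fun k hk => ?_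
    rw [← hA, coeff_conv_wq_of_lt hk, coeff_conv_wq_of_lt hk]
    refine sum_congr rfl fun m _ => ?_
    rw [coeff_fractalExtension_of_lt hA0 (by omega : k - m < q)]
  rwa [conv_left_cancel wq_zero_right ha.1 (hA.trans hBinv.symm)]

end

/-- The `P_{[0,q]}`-convolution of `q`-fractal series is `q`-fractal, its first `q`
coefficients are given by ordinary convolution, and the `∘`-inverse of a `q`-fractal
series is `q`-fractal: the `q`-fractal series form a group under the
`P_{[0,q]}`-convolution determined by their first `q` coefficients. -/
theorem stmt8 (q : ℕ) (hq : 2 ≤ q) (a b : PowerSeries ℝ)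
    (ha : IsFractal q a) (hb : IsFractal q b) :
    IsFractal q (conv (Wq q) a b) ∧
    (∀ n : ℕ, n < q →
      coeff n (conv (Wq q) a b) = ∑ m ∈ Finset.range (n + 1), coeff m a * coeff (n - m) b) ∧
    (∀ A : PowerSeries ℝ, conv (Wq q) a A = 1 → IsFractal q A) :=
  ⟨ha.conv_wq hb, fun _ hn => coeff_conv_wq_of_lt hn a b, fun _ hA => ha.of_conv_wq_eq_one hq hA⟩
end

section
/- Let q ≥ 2 be an integer. With log_∘ the ∘-logarithm for the P_{[0,q]}-convolution, the geometric series g = Σ_{n≥0} x^n satisfies log_∘ g = Σ_{k≥0} Σ_{n=1}^{q−1} x^{n·q^k}/n; that is, [x^N] log_∘ g = 1/n if N = n·q^k with 1 ≤ n ≤ q−1 and k ≥ 0, and [x^N] log_∘ g = 0 otherwise. -/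
open PowerSeries Finset

/-!
In base `q`, `W_q(N, m) = 1` exactly when each digit of `m` is at most the corresponding digit
of `N`, and then the digits of `N - m` are the differences. So sending `x^N` to the monomial
`∏ xᵢ ^ dᵢ(N)` in the digits of `N` turns the `∘`-convolution into ordinary multiplication of power
series in the variables `x₀, x₁, …`, read off at digit vectors. Under this map `(g - 1)^{(n)}`
becomes `(S - 1)^n` with `S = ∑_v x^v = ∏ᵢ (1 - xᵢ)⁻¹`, and `log_∘ g` becomes
`log S = -∑ᵢ log (1 - xᵢ)`, which has coefficient `1/n` at `xₖ^n` and none off the pure powers.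

The logarithm is computed through the Euler derivation `E`, multiplying the coefficient of `x^v`
by `|v|`. On one side `E (log S) = ∑ᵢ xᵢ / (1 - xᵢ)` is the series `A` of all pure powers, and
`S * A = E S` is a count. On the other, for the truncation `L_N` of the logarithm series the
geometric sum gives `S * E L_N = E S * (1 - (1 - S)^N)`, so `E L_N` and `A` agree up to degree `N`.
-/

section Digits

variable {q : ℕ}

def digitVec (q N : ℕ) : ℕ →₀ ℕ := (Nat.digits q N).toFinsupp

lemma digitVec_apply (hq : 2 ≤ q) (N i : ℕ) : digitVec q N i = N / q ^ i % q := by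
  rw [digitVec, List.toFinsupp_apply, Nat.getD_digits N i hq]

lemma digitVec_lt (hq : 2 ≤ q) (N i : ℕ) : digitVec q N i < q := by
  rw [digitVec_apply hq]
  exact Nat.mod_lt _ (by omega)

lemma weight_eq_sum_range {v : ℕ →₀ ℕ} {K : ℕ} (h : v.support ⊆ range K) :
    Finsupp.weight (q ^ ·) v = ∑ i ∈ range K, v i * q ^ i := by
  rw [Finsupp.weight_apply, Finsupp.sum_of_support_subset v h _ (by simp)]
  rfl

lemma sum_range_digitVec_mul_pow (hq : 2 ≤ q) (N K : ℕ) :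
    ∑ i ∈ range K, digitVec q N i * q ^ i = N % q ^ K := by
  induction K with
  | zero => simp [Nat.mod_one]
  | succ K ih => rw [sum_range_succ, ih, Nat.mod_pow_succ, digitVec_apply hq, mul_comm]

lemma weight_digitVec (hq : 2 ≤ q) (N : ℕ) : Finsupp.weight (q ^ ·) (digitVec q N) = N := by
  rw [weight_eq_sum_range (v := digitVec q N) (List.toFinsupp_support_subset _),
    sum_range_digitVec_mul_pow hq,
    Nat.mod_eq_of_lt (Nat.lt_base_pow_length_digits hq)]

lemma digitVec_eq_zero_iff (hq : 2 ≤ q) {N : ℕ} : digitVec q N = 0 ↔ N = 0 := by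
  constructor
  · intro h
    rw [← weight_digitVec hq N, h, map_zero]
  · rintro rfl
    simp [digitVec]

lemma degree_digitVec_le (hq : 2 ≤ q) (N : ℕ) : Finsupp.degree (digitVec q N) ≤ N := by
  conv_rhs => rw [← weight_digitVec hq N]
  rw [Finsupp.degree_apply, Finsupp.weight_apply, Finsupp.sum]
  exact sum_le_sum fun i _ => Nat.le_mul_of_pos_right _ (pow_pos (by omega) i)

lemma sum_range_mul_pow_lt {v : ℕ → ℕ} (hv : ∀ i, v i < q) (K : ℕ) :
    ∑ i ∈ range K, v i * q ^ i < q ^ K := by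
  induction K with
  | zero => simp
  | succ K ih =>
    have := Nat.mul_le_mul_right (q ^ K) (hv K)
    rw [sum_range_succ, pow_succ]
    nlinarith

lemma sum_range_mul_pow_div_pow_mod {v : ℕ → ℕ} (hv : ∀ i, v i < q) {i K : ℕ} (hi : i < K) :
    (∑ j ∈ range K, v j * q ^ j) / q ^ i % q = v i := by
  obtain ⟨B, hB⟩ : q ^ (i + 1) ∣ ∑ j ∈ Ico (i + 1) K, v j * q ^ j :=
    dvd_sum fun j hj => dvd_mul_of_dvd_right (pow_dvd_pow q (mem_Ico.1 hj).1) _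
  have hsplit : ∑ j ∈ range K, v j * q ^ j
      = ∑ j ∈ range i, v j * q ^ j + q ^ i * (v i + q * B) := by
    rw [← sum_range_add_sum_Ico _ (show i + 1 ≤ K by omega), sum_range_succ, hB, pow_succ]
    ring
  rw [hsplit, Nat.add_mul_div_left _ _ (pow_pos (by have := hv 0; omega) i),
    Nat.div_eq_of_lt (sum_range_mul_pow_lt hv i), zero_add, Nat.add_mul_mod_self_left,
    Nat.mod_eq_of_lt (hv i)]

lemma digitVec_weight (hq : 2 ≤ q) {v : ℕ →₀ ℕ} (hv : ∀ i, v i < q) :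
    digitVec q (Finsupp.weight (q ^ ·) v) = v := by
  ext i
  have hsupp : v.support ⊆ range (v.support.sup id + i + 1) := fun j hj =>
    mem_range.2 (Nat.lt_succ_of_le (le_add_right (le_sup (f := id) hj)))
  rw [digitVec_apply hq, weight_eq_sum_range hsupp, sum_range_mul_pow_div_pow_mod hv (by omega)]

lemma digitVec_mul_pow (hq : 2 ≤ q) {n : ℕ} (hn : n < q) (k : ℕ) :
    digitVec q (n * q ^ k) = Finsupp.single k n := by
  have := digitVec_weight hq (v := Finsupp.single k n)
    fun i => by rw [Finsupp.single_apply]; split_ifs <;> omega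
  rwa [Finsupp.weight_single, smul_eq_mul] at this

lemma card_support_digitVec_eq_one_iff (hq : 2 ≤ q) {N : ℕ} :
    (digitVec q N).support.card = 1 ↔ ∃ n k : ℕ, 1 ≤ n ∧ n < q ∧ N = n * q ^ k := by
  constructor
  · rw [Finsupp.card_support_eq_one]
    rintro ⟨k, hk, hsingle⟩
    refine ⟨digitVec q N k, k, Nat.one_le_iff_ne_zero.2 hk, digitVec_lt hq N k, ?_⟩
    have := weight_digitVec hq N
    rwa [hsingle, Finsupp.weight_single, smul_eq_mul, eq_comm] at this
  · rintro ⟨n, k, hn, hnq, rfl⟩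
    rw [digitVec_mul_pow hq hnq, Finsupp.support_single _ (by omega), card_singleton]

lemma digitVec_le_digitVec_iff (hq : 2 ≤ q) {N m : ℕ} :
    digitVec q m ≤ digitVec q N ↔ ∀ r : ℕ, 1 ≤ r → m % q ^ r ≤ N % q ^ r := by
  constructor
  · intro h r _
    rw [← sum_range_digitVec_mul_pow hq, ← sum_range_digitVec_mul_pow hq]
    exact sum_le_sum fun i _ => Nat.mul_le_mul_right _ (Finsupp.le_def.1 h i)
  · intro h
    rw [Finsupp.le_def]
    intro i
    by_contra hlt
    have hmod := h (i + 1) (by omega)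
    rw [Nat.mod_pow_succ, Nat.mod_pow_succ, ← digitVec_apply hq, ← digitVec_apply hq] at hmod
    have hpow : 0 < q ^ i := pow_pos (by omega) i
    have := Nat.mod_lt N hpow
    have : q ^ i * (digitVec q N i + 1) ≤ q ^ i * digitVec q m i :=
      Nat.mul_le_mul_left _ (not_le.1 hlt)
    linarith [Nat.zero_le (m % q ^ i)]

end Digits

section Bridge

variable {q : ℕ}

lemma Wq_eq_ite (hq : 2 ≤ q) (N m : ℕ) :
    Wq q N m = if digitVec q m ≤ digitVec q N then 1 else 0 := by
  classical
  exact if_congr (digitVec_le_digitVec_iff hq).symm rfl rfl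

lemma lt_of_add_eq_digitVec (hq : 2 ≤ q) {u w : ℕ →₀ ℕ} {N : ℕ} (h : u + w = digitVec q N)
    (i : ℕ) : u i < q :=
  (le_self_add.trans (Finsupp.le_def.1 h.le i)).trans_lt (digitVec_lt hq N i)

lemma digitVec_sub (hq : 2 ≤ q) {N m : ℕ} (h : digitVec q m ≤ digitVec q N) :
    digitVec q (N - m) = digitVec q N - digitVec q m := by
  have hsplit := tsub_add_cancel_of_le h
  have hw := congrArg (Finsupp.weight (q ^ ·)) hsplit
  rw [map_add, weight_digitVec hq, weight_digitVec hq] at hw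
  rw [show N - m = Finsupp.weight (q ^ ·) (digitVec q N - digitVec q m) by omega,
    digitVec_weight hq (lt_of_add_eq_digitVec hq hsplit)]

lemma sum_range_Wq_mul_eq_sum_antidiagonal (hq : 2 ≤ q) (φ : (ℕ →₀ ℕ) → (ℕ →₀ ℕ) → ℝ)
    (N : ℕ) :
    ∑ m ∈ range (N + 1), Wq q N m * φ (digitVec q m) (digitVec q (N - m))
      = ∑ p ∈ antidiagonal (digitVec q N), φ p.1 p.2 := by
  simp_rw [Wq_eq_ite hq, ite_mul, one_mul, zero_mul]
  rw [← sum_filter]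
  have hweight : ∀ p ∈ antidiagonal (digitVec q N),
      Finsupp.weight (q ^ ·) p.1 + Finsupp.weight (q ^ ·) p.2 = N := fun p hp => by
    rw [← map_add, Finset.HasAntidiagonal.mem_antidiagonal.1 hp, weight_digitVec hq]
  have hfst : ∀ p ∈ antidiagonal (digitVec q N),
      digitVec q (Finsupp.weight (q ^ ·) p.1) = p.1 := fun p hp =>
    digitVec_weight hq (lt_of_add_eq_digitVec hq (Finset.HasAntidiagonal.mem_antidiagonal.1 hp))
  have hsnd : ∀ p ∈ antidiagonal (digitVec q N),
      digitVec q (N - Finsupp.weight (q ^ ·) p.1) = p.2 := fun p hp => by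
    rw [← hweight p hp, Nat.add_sub_cancel_left, digitVec_weight hq (lt_of_add_eq_digitVec hq
      ((add_comm _ _).trans (Finset.HasAntidiagonal.mem_antidiagonal.1 hp)))]
  refine sum_nbij' (fun m => (digitVec q m, digitVec q (N - m)))
    (fun p => Finsupp.weight (q ^ ·) p.1) (fun m hm => ?_) (fun p hp => ?_)
    (fun m _ => weight_digitVec hq m) (fun p hp => Prod.ext (hfst p hp) (hsnd p hp))
    (fun _ _ => rfl)
  · have hle := (mem_filter.1 hm).2
    rw [Finset.HasAntidiagonal.mem_antidiagonal, digitVec_sub hq hle, add_tsub_cancel_of_le hle]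
  · refine mem_filter.2 ⟨mem_range.2 (by have := hweight p hp; omega), ?_⟩
    rw [hfst p hp, ← Finset.HasAntidiagonal.mem_antidiagonal.1 hp]
    exact le_self_add

lemma coeff_conv_Wq (hq : 2 ≤ q) {a b : PowerSeries ℝ} {A B : MvPowerSeries ℕ ℝ}
    (ha : ∀ m, coeff m a = MvPowerSeries.coeff (digitVec q m) A)
    (hb : ∀ m, coeff m b = MvPowerSeries.coeff (digitVec q m) B) (N : ℕ) :
    coeff N (conv (Wq q) a b) = MvPowerSeries.coeff (digitVec q N) (A * B) := by
  rw [conv, coeff_mk, MvPowerSeries.coeff_mul,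
    ← sum_range_Wq_mul_eq_sum_antidiagonal hq
      (fun u w => MvPowerSeries.coeff u A * MvPowerSeries.coeff w B)]
  exact sum_congr rfl fun m _ => by rw [ha, hb, mul_assoc]

lemma coeff_convPow_Wq (hq : 2 ≤ q) {a : PowerSeries ℝ} {A : MvPowerSeries ℕ ℝ}
    (ha : ∀ m, coeff m a = MvPowerSeries.coeff (digitVec q m) A) (n N : ℕ) :
    coeff N (convPow (Wq q) a n) = MvPowerSeries.coeff (digitVec q N) (A ^ n) := by
  induction n generalizing N with
  | zero => simp [convPow, coeff_one, MvPowerSeries.coeff_one, digitVec_eq_zero_iff hq]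
  | succ n ih => rw [convPow, pow_succ', coeff_conv_Wq hq ha ih]

end Bridge

section EulerDerivation

variable {σ R : Type*} [CommRing R]

noncomputable def eulerDeriv : Derivation R (MvPowerSeries σ R) (MvPowerSeries σ R) :=
  Derivation.mk'
    { toFun := fun f (d : σ →₀ ℕ) => ((Finsupp.degree d : ℕ) : R) * MvPowerSeries.coeff d f
      map_add' := fun f g => funext fun d => mul_add _ _ _
      map_smul' := fun r f => funext fun d => mul_left_comm _ _ _ }
    fun f g => by
      classical
      ext d
      change ((Finsupp.degree d : ℕ) : R) * MvPowerSeries.coeff d (f * g) = _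
      rw [smul_eq_mul, smul_eq_mul, map_add, mul_comm g, MvPowerSeries.coeff_mul,
        MvPowerSeries.coeff_mul, MvPowerSeries.coeff_mul, mul_sum, ← sum_add_distrib]
      refine sum_congr rfl fun p hp => ?_
      change _ = _ * (((Finsupp.degree p.2 : ℕ) : R) * _) + ((Finsupp.degree p.1 : ℕ) : R) * _ * _
      rw [← Finset.HasAntidiagonal.mem_antidiagonal.1 hp, map_add, Nat.cast_add]
      ring

lemma coeff_eulerDeriv (f : MvPowerSeries σ R) (d : σ →₀ ℕ) :
    MvPowerSeries.coeff d (eulerDeriv f) = (Finsupp.degree d : ℕ) * MvPowerSeries.coeff d f :=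
  rfl

lemma constantCoeff_eulerDeriv (f : MvPowerSeries σ R) :
    MvPowerSeries.constantCoeff (eulerDeriv f) = 0 := by
  rw [← MvPowerSeries.coeff_zero_eq_constantCoeff_apply, coeff_eulerDeriv, map_zero,
    Nat.cast_zero, zero_mul]

end EulerDerivation

section GeometricSeries

variable (σ R : Type*) [CommRing R]

def mvGeom : MvPowerSeries σ R := fun _ => 1

def purePowers : MvPowerSeries σ R := fun d => if d.support.card = 1 then 1 else 0

variable {σ R}

@[simp] lemma coeff_mvGeom (d : σ →₀ ℕ) : MvPowerSeries.coeff d (mvGeom σ R) = 1 := rfl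

lemma constantCoeff_mvGeom : MvPowerSeries.constantCoeff (mvGeom σ R) = 1 := rfl

lemma card_filter_antidiagonal_card_support_eq_one [DecidableEq σ] (d : σ →₀ ℕ) :
    #{p ∈ antidiagonal d | p.2.support.card = 1} = Finsupp.degree d := by
  have hsigma : Finsupp.degree d = #(d.support.sigma fun i => Icc 1 (d i)) := by
    simp [Finsupp.degree_apply, card_sigma]
  rw [hsigma, eq_comm]
  refine card_bij (fun x _ => (d - Finsupp.single x.1 x.2, Finsupp.single x.1 x.2))
    (fun x hx => ?_) (fun x hx y _ hxy => ?_) (fun p hp => ?_)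
  · obtain ⟨-, hk⟩ := mem_sigma.1 hx
    obtain ⟨hk1, hk2⟩ := mem_Icc.1 hk
    refine mem_filter.2 ⟨Finset.HasAntidiagonal.mem_antidiagonal.2 (tsub_add_cancel_of_le ?_), ?_⟩
    · rw [Finsupp.single_le_iff]; exact hk2
    · rw [Finsupp.support_single _ (by omega), card_singleton]
  · have hx0 := (mem_Icc.1 (mem_sigma.1 hx).2).1
    obtain ⟨h1, h2⟩ | ⟨h1, -⟩ := (Finsupp.single_eq_single_iff _ _ _ _).1 (Prod.ext_iff.1 hxy).2
    · exact Sigma.ext h1 (heq_of_eq h2)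
    · omega
  · obtain ⟨hp, hcard⟩ := mem_filter.1 hp
    obtain ⟨i, hi, hsingle⟩ := Finsupp.card_support_eq_one.1 hcard
    have hsum := Finset.HasAntidiagonal.mem_antidiagonal.1 hp
    have hle : p.2 i ≤ d i := by rw [← hsum]; exact le_add_self
    have hmem : (⟨i, p.2 i⟩ : Σ _ : σ, ℕ) ∈ d.support.sigma fun i => Icc 1 (d i) :=
      have hi' : d i ≠ 0 := by omega
      mem_sigma.2 ⟨Finsupp.mem_support_iff.2 hi', mem_Icc.2 ⟨Nat.one_le_iff_ne_zero.2 hi, hle⟩⟩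
    refine ⟨_, hmem, ?_⟩
    rw [← hsingle, ← hsum, add_tsub_cancel_right]

lemma mvGeom_mul_purePowers : mvGeom σ R * purePowers σ R = eulerDeriv (mvGeom σ R) := by
  ext d
  classical
  rw [MvPowerSeries.coeff_mul, coeff_eulerDeriv, coeff_mvGeom, mul_one,
    ← card_filter_antidiagonal_card_support_eq_one, ← sum_boole]
  exact sum_congr rfl fun p _ => by rw [coeff_mvGeom, one_mul]; rfl

end GeometricSeries

section PartialLog

variable (σ K : Type*) [Field K]

noncomputable def partialLog (N : ℕ) : MvPowerSeries σ K :=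
  ∑ n ∈ Icc 1 N, ((-1 : K) ^ (n - 1) / n) • (mvGeom σ K - 1) ^ n

variable {σ K}

lemma mvGeom_mul_eulerDeriv_partialLog [CharZero K] (N : ℕ) :
    mvGeom σ K * eulerDeriv (partialLog σ K N)
      = eulerDeriv (mvGeom σ K) * (1 - (1 - mvGeom σ K) ^ N) := by
  set S := mvGeom σ K
  have hterm : ∀ n ∈ Icc 1 N, eulerDeriv (((-1 : K) ^ (n - 1) / n) • (S - 1) ^ n)
      = (1 - S) ^ (n - 1) * eulerDeriv S := fun n hn => by
    have hn0 : (n : K) ≠ 0 := Nat.cast_ne_zero.2 (by have := (mem_Icc.1 hn).1; omega)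
    have hneg : (1 - S) ^ (n - 1) = ((-1 : K) ^ (n - 1)) • (S - 1) ^ (n - 1) := by
      rw [← smul_pow, neg_one_smul, neg_sub]
    rw [Derivation.map_smul, Derivation.leibniz_pow, map_sub, Derivation.map_one_eq_zero,
      sub_zero, hneg, smul_eq_mul ((S - 1) ^ (n - 1)), ← Nat.cast_smul_eq_nsmul K, smul_smul,
      smul_mul_assoc, div_mul_cancel₀ _ hn0]
  have hgeom : ∑ n ∈ Icc 1 N, (1 - S) ^ (n - 1) = ∑ n ∈ range N, (1 - S) ^ n := by
    rw [← Finset.Ico_add_one_right_eq_Icc, sum_Ico_eq_sum_range, Nat.add_sub_cancel]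
    simp_rw [Nat.add_sub_cancel_left]
  rw [partialLog, map_sum, sum_congr rfl hterm, ← sum_mul, hgeom, ← geom_sum_mul_neg,
    sub_sub_cancel]
  ring

lemma degree_mul_coeff_partialLog [CharZero K] {N : ℕ} {d : σ →₀ ℕ}
    (hd : Finsupp.degree d ≤ N) :
    ((Finsupp.degree d : ℕ) : K) * MvPowerSeries.coeff d (partialLog σ K N)
      = MvPowerSeries.coeff d (purePowers σ K) := by
  set S := mvGeom σ K
  have hS : MvPowerSeries.constantCoeff S ≠ 0 := by
    rw [constantCoeff_mvGeom]; exact one_ne_zero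
  have hprod : S * (eulerDeriv (partialLog σ K N) - purePowers σ K)
      = -(eulerDeriv S * (1 - S) ^ N) := by
    rw [mul_sub, mvGeom_mul_eulerDeriv_partialLog, mvGeom_mul_purePowers]
    ring
  have hE : 1 ≤ (eulerDeriv S).order :=
    MvPowerSeries.one_le_order_iff_constCoeff_eq_zero.2 (constantCoeff_eulerDeriv S)
  have hpow : (N : ℕ∞) ≤ ((1 - S) ^ N).order :=
    MvPowerSeries.le_order_pow_of_constantCoeff_eq_zero N
      (by rw [map_sub, map_one, constantCoeff_mvGeom, sub_self])
  have hord : ((N + 1 : ℕ) : ℕ∞) ≤ (eulerDeriv (partialLog σ K N) - purePowers σ K).order := by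
    rw [← one_mul (_ - _), ← MvPowerSeries.inv_mul_cancel S hS, mul_assoc, hprod, mul_neg,
      MvPowerSeries.order_neg]
    calc ((N + 1 : ℕ) : ℕ∞) = 0 + (1 + (N : ℕ∞)) := by push_cast; ring
      _ ≤ S⁻¹.order + ((eulerDeriv S).order + ((1 - S) ^ N).order) :=
        add_le_add zero_le (add_le_add hE hpow)
      _ ≤ _ := (add_le_add le_rfl MvPowerSeries.le_order_mul).trans MvPowerSeries.le_order_mul
  have := MvPowerSeries.coeff_of_lt_order (d := d)
    ((Nat.cast_lt.2 (Nat.lt_succ_of_le hd)).trans_le hord)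
  rwa [map_sub, coeff_eulerDeriv, sub_eq_zero] at this

end PartialLog

section GeometricConvLog

variable {q : ℕ}

lemma coeff_geom_sub_one_eq (hq : 2 ≤ q) (m : ℕ) :
    coeff m ((PowerSeries.mk fun _ => (1 : ℝ)) - 1)
      = MvPowerSeries.coeff (digitVec q m) (mvGeom ℕ ℝ - 1) := by
  simp only [map_sub, coeff_mk, coeff_one, coeff_mvGeom, MvPowerSeries.coeff_one,
    digitVec_eq_zero_iff hq]

lemma degree_digitVec_mul_coeff_convLog (hq : 2 ≤ q) (N : ℕ) :
    ((Finsupp.degree (digitVec q N) : ℕ) : ℝ)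
        * coeff N (convLog (Wq q) (PowerSeries.mk fun _ => (1 : ℝ)))
      = if (digitVec q N).support.card = 1 then 1 else 0 := by
  have hlog : coeff N (convLog (Wq q) (PowerSeries.mk fun _ => (1 : ℝ)))
      = MvPowerSeries.coeff (digitVec q N) (partialLog ℕ ℝ N) := by
    rw [convLog, coeff_mk, partialLog, map_sum]
    refine sum_congr rfl fun n _ => ?_
    rw [coeff_convPow_Wq hq (coeff_geom_sub_one_eq hq), MvPowerSeries.coeff_smul]
  rw [hlog, degree_mul_coeff_partialLog (degree_digitVec_le hq N)]
  rfl

end GeometricConvLog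

/-- For the geometric series `g = Σ x^n`, the `∘`-logarithm for the `P_{[0,q]}`-convolution
is `log_∘ g = Σ_{k≥0} Σ_{n=1}^{q−1} x^{n·q^k}/n`. -/
theorem stmt10 (q : ℕ) (hq : 2 ≤ q) :
    (∀ n k : ℕ, 1 ≤ n → n < q →
      coeff (n * q ^ k) (convLog (Wq q) (PowerSeries.mk fun _ => (1 : ℝ))) = 1 / n) ∧
    (∀ N : ℕ, (¬ ∃ n k : ℕ, 1 ≤ n ∧ n < q ∧ N = n * q ^ k) →
      coeff N (convLog (Wq q) (PowerSeries.mk fun _ => (1 : ℝ))) = 0) := by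
  refine ⟨fun n k hn hnq => ?_, fun N hN => ?_⟩
  · have h := degree_digitVec_mul_coeff_convLog hq (n * q ^ k)
    rw [if_pos ((card_support_digitVec_eq_one_iff hq).2 ⟨n, k, hn, hnq, rfl⟩),
      digitVec_mul_pow hq hnq, Finsupp.degree_single] at h
    rw [eq_div_iff (by positivity), mul_comm, h]
  · have h := degree_digitVec_mul_coeff_convLog hq N
    rw [if_neg (mt (card_support_digitVec_eq_one_iff hq).1 hN)] at h
    rcases mul_eq_zero.1 h with hdeg | hcoeff
    · rw [Nat.cast_eq_zero, Finsupp.degree_eq_zero_iff, digitVec_eq_zero_iff hq] at hdeg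
      simp [hdeg, convLog]
    · exact hcoeff
end

section
/- Let q ≥ 2 be an integer, n ≥ 1, and φ, β ∈ ℝ. For t ∈ ℝ define A_t(0) = 1 and A_t(m) = t·(t+m)^{{m}−1} for m ≥ 1 (a natural number power, since {m} ≥ 1 for m ≥ 1). Then (φ+β)·(φ+β+n)^{{n}−1} = Σ_{m=0}^n C_q(n,m)·A_φ(m)·A_β(n−m). -/
/-!
The formula is Hurwitz's generalisation of Abel's identity applied to the "digit units" of `n`.
For weights `w` on a finite set `s`, write `w_T = ∑_{i ∈ T} w i` and
`A_x(T) = x (x + w_T)^{|T|-1}` (`A_x(∅) = 1`); Hurwitz's identity reads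
`∑_{T ⊆ s} A_x(T) A_y(s \ T) = (x + y) (x + y + w_s)^{|s|-1}`.
Take `n_t` units of weight `q^t` for each digit position `t`. A subset of weight `m` has digits
`m_t ≤ n_t`, so adding up its weights produces no carries: its cardinality is `{m}`, its
complement has weight `n - m`, and exactly `C_q(n, m) = ∏_t binom(n_t, m_t)` subsets have
weight `m`.

Hurwitz's identity follows by induction on `s` once one knows that
`∑_{T ⊆ s} (x + w_T)^{|T|} (y + w_{s \ T})^{|s \ T|}` depends only on `x + y`. Expanded in powers
of `x + y + w_s`, its coefficients are iterated finite differences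
`∑_{T ⊆ U} (-1)^{|T|} (x + w_T)^{|U|}` with steps `w_i`, and these are constant in `x` because
each difference lowers the degree of a polynomial.
-/

open Finset

/-- Base-`q` digit sum `{n} = Σ_t n_t`, where `n_t = n / q^t % q`. -/
def digitSum (q n : ℕ) : ℕ := ∑ t ∈ Finset.range (n + 1), n / q ^ t % q

/-- Fractal binomial coefficient `C_q(n,m) = Π_t binom(n_t, m_t)`. -/
def Cq (q n m : ℕ) : ℕ :=
  ∏ t ∈ Finset.range (n + m + 1), Nat.choose (n / q ^ t % q) (m / q ^ t % q)

/-- The Abel-type factor `A_t(m)`: `A_t(0) = 1` and `A_t(m) = t·(t+m)^{{m}−1}` for `m ≥ 1`. -/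
noncomputable def Afun (q : ℕ) (t : ℝ) (m : ℕ) : ℝ :=
  if m = 0 then 1 else t * (t + m) ^ (digitSum q m - 1)

theorem Finset.sum_range_mul {M : Type*} [AddCommMonoid M] (f : ℕ → M) (a b : ℕ) :
    ∑ m ∈ range (a * b), f m = ∑ j ∈ range b, ∑ r ∈ range a, f (r + a * j) := by
  induction b with
  | zero => simp
  | succ b ih =>
    rw [Nat.mul_succ, sum_range_add, ih, sum_range_succ]
    simp only [add_comm (a * b)]

theorem Finset.sum_powerset_union_of_disjoint {α M : Type*} [DecidableEq α] [AddCommMonoid M]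
    {A B : Finset α} (hAB : Disjoint A B) (f : Finset α → M) :
    ∑ T ∈ (A ∪ B).powerset, f T = ∑ U ∈ A.powerset, ∑ V ∈ B.powerset, f (U ∪ V) := by
  induction B using Finset.induction generalizing f with
  | empty => simp
  | @insert b B hb ih =>
    have hbA : b ∉ A ∪ B := by simp [hb, disjoint_right.mp hAB (mem_insert_self b B)]
    have hAB' := hAB.mono_right (subset_insert b B)
    simp_rw [union_insert, sum_powerset_insert hbA, ih hAB', sum_powerset_insert hb, union_insert,
      sum_add_distrib]

theorem Finset.sum_powerset_sdiff {ι M : Type*} [DecidableEq ι] [AddCommMonoid M] (s : Finset ι)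
    (f : Finset ι → M) : ∑ T ∈ s.powerset, f (s \ T) = ∑ T ∈ s.powerset, f T := by
  refine sum_nbij' (s \ ·) (s \ ·) (fun _ _ => mem_powerset.mpr sdiff_subset)
    (fun _ _ => mem_powerset.mpr sdiff_subset) (fun T hT => ?_) (fun T hT => ?_) (fun _ _ => rfl)
    <;> exact sdiff_sdiff_eq_self (mem_powerset.mp hT)

namespace Polynomial

variable {R : Type*} [CommRing R]

theorem natDegree_sub_taylor_le (p : R[X]) (r : R) :
    (p - taylor r p).natDegree ≤ p.natDegree - 1 :=
  natDegree_le_pred ((natDegree_sub_le _ _).trans (by rw [natDegree_taylor, max_self]))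
    (by rw [coeff_sub, coeff_taylor_natDegree, leadingCoeff, sub_self])

theorem natDegree_sum_powerset_neg_one_pow_smul_taylor_le {ι : Type*} [DecidableEq ι]
    (w : ι → R) (s : Finset ι) (p : R[X]) :
    (∑ T ∈ s.powerset, (-1 : R) ^ #T • taylor (∑ i ∈ T, w i) p).natDegree ≤ p.natDegree - #s := by
  induction s using Finset.induction generalizing p with
  | empty => simp
  | @insert a s ha ih =>
    have hstep : ∑ T ∈ (insert a s).powerset, (-1 : R) ^ #T • taylor (∑ i ∈ T, w i) p =
        ∑ T ∈ s.powerset, (-1 : R) ^ #T • taylor (∑ i ∈ T, w i) (p - taylor (w a) p) := by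
      rw [sum_powerset_insert ha, ← sum_add_distrib]
      refine sum_congr rfl fun T hT => ?_
      have haT : a ∉ T := fun h => ha (mem_powerset.mp hT h)
      rw [card_insert_of_notMem haT, sum_insert haT, add_comm (w a), ← taylor_taylor, map_sub,
        pow_succ, mul_neg_one, neg_smul, smul_sub, sub_eq_add_neg]
    rw [hstep, card_insert_of_notMem ha]
    have := natDegree_sub_taylor_le p (w a)
    exact (ih _).trans (by omega)

end Polynomial

open Polynomial in
theorem sum_powerset_neg_one_pow_mul_pow_add_eq {ι R : Type*} [DecidableEq ι] [CommRing R]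
    (w : ι → R) {s : Finset ι} {k : ℕ} (hk : k ≤ #s) (x y : R) :
    ∑ T ∈ s.powerset, (-1) ^ #T * (x + ∑ i ∈ T, w i) ^ k =
      ∑ T ∈ s.powerset, (-1) ^ #T * (y + ∑ i ∈ T, w i) ^ k := by
  set D := ∑ T ∈ s.powerset, (-1 : R) ^ #T • taylor (∑ i ∈ T, w i) (X ^ k)
  have hD : ∀ z, D.eval z = ∑ T ∈ s.powerset, (-1) ^ #T * (z + ∑ i ∈ T, w i) ^ k := by
    intro z
    simp [D, eval_finsetSum]
  have hconst : D.natDegree = 0 := by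
    have : D.natDegree ≤ (X ^ k).natDegree - #s :=
      natDegree_sum_powerset_neg_one_pow_smul_taylor_le w s (X ^ k)
    have := natDegree_X_pow_le (R := R) k
    omega
  rw [← hD, ← hD, eq_C_of_natDegree_eq_zero hconst, eval_C, eval_C]

section Hurwitz

variable {ι R : Type*} [DecidableEq ι] [CommRing R] (w : ι → R)

def abelA (x : R) (T : Finset ι) : R := if T = ∅ then 1 else x * (x + ∑ i ∈ T, w i) ^ (#T - 1)

def abelB (x : R) (T : Finset ι) : R := (x + ∑ i ∈ T, w i) ^ #T

theorem sum_abelB_mul_abelB_eq (s : Finset ι) (x y : R) :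
    ∑ T ∈ s.powerset, abelB w x T * abelB w y (s \ T) =
      ∑ U ∈ s.powerset, (x + y + ∑ i ∈ s, w i) ^ #U * (-1) ^ #(s \ U) *
        ∑ T ∈ (s \ U).powerset, (-1) ^ #T * (x + ∑ i ∈ T, w i) ^ #(s \ U) := by
  set S := x + y + ∑ i ∈ s, w i with hS
  have hterm : ∀ T ∈ s.powerset, abelB w x T * abelB w y (s \ T) =
      ∑ U ∈ (s \ T).powerset,
        S ^ #U * (-1) ^ #(s \ U) * ((-1) ^ #T * (x + ∑ i ∈ T, w i) ^ #(s \ U)) := by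
    intro T hT
    have hTs := mem_powerset.mp hT
    have hsplit : y + ∑ i ∈ s \ T, w i = S + -(x + ∑ i ∈ T, w i) := by
      rw [hS, ← sum_sdiff hTs]; ring
    rw [abelB, abelB, hsplit, ← sum_pow_mul_eq_add_pow S, mul_sum]
    refine sum_congr rfl fun U hU => ?_
    obtain ⟨hUs, hUT⟩ := subset_sdiff.mp (mem_powerset.mp hU)
    have hcard : #T + #U ≤ #s := by
      rw [← card_union_of_disjoint hUT.symm]; exact card_le_card (union_subset hTs hUs)
    obtain ⟨a, ha⟩ : ∃ a, #s = #T + #U + a := ⟨_, (Nat.add_sub_of_le hcard).symm⟩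
    have hsq : ((-1 : R) ^ #T) ^ 2 = 1 := by rw [← pow_mul, pow_mul', neg_one_sq, one_pow]
    rw [card_sdiff_of_subset hTs, card_sdiff_of_subset hUs, ha,
      show #T + #U + a - #T - #U = a by omega, show #T + #U + a - #U = a + #T by omega,
      neg_pow]
    linear_combination (-(S ^ #U * (-1) ^ a * (x + ∑ i ∈ T, w i) ^ (a + #T))) * hsq
  rw [sum_congr rfl hterm, sum_comm' (t' := s.powerset) (s' := fun U => (s \ U).powerset)]
  · exact sum_congr rfl fun U _ => by rw [mul_sum]
  · intro T U
    simp only [mem_powerset, subset_sdiff, disjoint_comm]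
    tauto

theorem sum_abelB_mul_abelB_eq_of_add_eq (s : Finset ι) {x y x' y' : R} (h : x + y = x' + y') :
    ∑ T ∈ s.powerset, abelB w x T * abelB w y (s \ T) =
      ∑ T ∈ s.powerset, abelB w x' T * abelB w y' (s \ T) := by
  rw [sum_abelB_mul_abelB_eq, sum_abelB_mul_abelB_eq, h]
  exact sum_congr rfl fun U _ => by rw [sum_powerset_neg_one_pow_mul_pow_add_eq w le_rfl x x']

theorem abelA_insert {a : ι} {T : Finset ι} (ha : a ∉ T) (x : R) :
    abelA w x (insert a T) = x * abelB w (x + w a) T := by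
  rw [abelA, if_neg (insert_ne_empty a T), card_insert_of_notMem ha, Nat.add_sub_cancel,
    sum_insert ha, abelB, add_assoc]

theorem abelB_insert {a : ι} {T : Finset ι} (ha : a ∉ T) (x : R) :
    abelB w x (insert a T) = (x + w a + ∑ i ∈ T, w i) * abelB w (x + w a) T := by
  rw [abelB, abelB, card_insert_of_notMem ha, sum_insert ha, pow_succ', add_assoc]

theorem abelA_mul_add_sum (x : R) (T : Finset ι) :
    abelA w x T * (x + ∑ i ∈ T, w i) = x * abelB w x T := by
  rcases T.eq_empty_or_nonempty with rfl | hT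
  · simp [abelA, abelB]
  · rw [abelA, if_neg hT.ne_empty, abelB, mul_assoc, ← pow_succ, Nat.sub_add_cancel hT.card_pos]

theorem sum_abelA_mul_abelB (s : Finset ι) (x y : R) :
    ∑ T ∈ s.powerset, abelA w x T * abelB w y (s \ T) = (x + y + ∑ i ∈ s, w i) ^ #s := by
  induction s using Finset.induction generalizing y with
  | empty => simp [abelA, abelB]
  | @insert a s ha ih =>
    set S := x + y + ∑ i ∈ insert a s, w i with hS
    have hnotMem : ∀ T ∈ s.powerset, abelA w x T * abelB w y (insert a s \ T) =
        S * (abelA w x T * abelB w (y + w a) (s \ T)) -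
          x * (abelB w x T * abelB w (y + w a) (s \ T)) := by
      intro T hT
      have hTs := mem_powerset.mp hT
      have hsplit : y + w a + ∑ i ∈ s \ T, w i = S - (x + ∑ i ∈ T, w i) := by
        rw [hS, sum_insert ha, ← sum_sdiff hTs]; ring
      rw [insert_sdiff_of_notMem _ (fun h => ha (hTs h)),
        abelB_insert w (fun h => ha (mem_sdiff.mp h).1), hsplit]
      linear_combination (-abelB w (y + w a) (s \ T)) * abelA_mul_add_sum w x T
    have hmem : ∀ T ∈ s.powerset, abelA w x (insert a T) * abelB w y (insert a s \ insert a T) =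
        x * (abelB w (x + w a) T * abelB w y (s \ T)) := by
      intro T hT
      rw [abelA_insert w (fun h => ha (mem_powerset.mp hT h)), insert_sdiff_insert,
        sdiff_insert_of_notMem ha, mul_assoc]
    rw [sum_powerset_insert ha, sum_congr rfl hnotMem, sum_congr rfl hmem, sum_sub_distrib,
      ← mul_sum, ← mul_sum, ← mul_sum, ih,
      sum_abelB_mul_abelB_eq_of_add_eq w s (x := x + w a) (y' := y + w a) (by ring),
      card_insert_of_notMem ha, hS, sum_insert ha]
    ring

theorem sum_abelA_mul_abelA {s : Finset ι} (hs : s.Nonempty) (x y : R) :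
    ∑ T ∈ s.powerset, abelA w x T * abelA w y (s \ T) =
      (x + y) * (x + y + ∑ i ∈ s, w i) ^ (#s - 1) := by
  obtain ⟨s, a, ha, rfl⟩ := hs.exists_cons_eq
  rw [cons_eq_insert] at *
  have hnotMem : ∀ T ∈ s.powerset, abelA w x T * abelA w y (insert a s \ T) =
      y * (abelA w x T * abelB w (y + w a) (s \ T)) := by
    intro T hT
    rw [insert_sdiff_of_notMem _ (fun h => ha (mem_powerset.mp hT h)),
      abelA_insert w (fun h => ha (mem_sdiff.mp h).1)]
    ring
  have hmem : ∀ T ∈ s.powerset, abelA w x (insert a T) * abelA w y (insert a s \ insert a T) =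
      x * (abelA w y (s \ T) * abelB w (x + w a) (s \ (s \ T))) := by
    intro T hT
    rw [abelA_insert w (fun h => ha (mem_powerset.mp hT h)), insert_sdiff_insert,
      sdiff_insert_of_notMem ha, Finset.sdiff_sdiff_eq_self (mem_powerset.mp hT)]
    ring
  rw [sum_powerset_insert ha, sum_congr rfl hnotMem, sum_congr rfl hmem, ← mul_sum, ← mul_sum,
    sum_powerset_sdiff s (fun U => abelA w y U * abelB w (x + w a) (s \ U)),
    sum_abelA_mul_abelB, sum_abelA_mul_abelB, card_insert_of_notMem ha, Nat.add_sub_cancel,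
    sum_insert ha]
  ring
end Hurwitz

namespace Nat

variable {q : ℕ}

theorem sum_range_div_pow_mod_mul_pow (q n K : ℕ) :
    ∑ t ∈ range K, n / q ^ t % q * q ^ t = n % q ^ K := by
  induction K with
  | zero => simp [Nat.mod_one]
  | succ K ih => rw [sum_range_succ, ih, Nat.mod_pow_succ, mul_comm]

theorem add_pow_mul_div_pow_mod_of_lt (hq : 0 < q) {t K : ℕ} (ht : t < K) (r j : ℕ) :
    (r + q ^ K * j) / q ^ t % q = r / q ^ t % q := by
  obtain ⟨d, rfl⟩ : ∃ d, K = t + 1 + d := ⟨K - t - 1, by omega⟩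
  rw [show q ^ (t + 1 + d) * j = q ^ t * (q * (q ^ d * j)) by ring,
    Nat.add_mul_div_left _ _ (pow_pos hq t), Nat.add_mul_mod_self_left]

theorem add_pow_mul_div_pow_of_lt (hq : 0 < q) {r K : ℕ} (hr : r < q ^ K) (j : ℕ) :
    (r + q ^ K * j) / q ^ K = j := by
  rw [Nat.add_mul_div_left _ _ (pow_pos hq K), Nat.div_eq_of_lt hr, zero_add]

theorem sum_range_div_pow_mod_of_le (hq : 0 < q) {n K L : ℕ} (hn : n < q ^ K) (hKL : K ≤ L) :
    ∑ t ∈ range L, n / q ^ t % q = ∑ t ∈ range K, n / q ^ t % q := by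
  refine (sum_subset (range_subset_range.mpr hKL) fun t _ ht => ?_).symm
  have hKt : K ≤ t := by simpa using ht
  rw [Nat.div_eq_of_lt (hn.trans_le (Nat.pow_le_pow_right hq hKt)), Nat.zero_mod]

theorem lt_pow_succ_self (hq : 2 ≤ q) (n : ℕ) : n < q ^ (n + 1) :=
  (Nat.lt_succ_self n).trans (Nat.lt_pow_self hq)

end Nat

section DigitUnits

variable {q : ℕ}

theorem digitSum_eq_sum_range (hq : 2 ≤ q) {n K : ℕ} (hn : n < q ^ K) :
    digitSum q n = ∑ t ∈ range K, n / q ^ t % q := by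
  rw [digitSum, ← Nat.sum_range_div_pow_mod_of_le (by omega) (Nat.lt_pow_succ_self hq n)
    (Nat.le_add_left (n + 1) K),
    Nat.sum_range_div_pow_mod_of_le (by omega) hn (Nat.le_add_right K _)]

theorem digitSum_add_pow_mul (hq : 2 ≤ q) {r K j : ℕ} (hr : r < q ^ K) (hj : j < q) :
    digitSum q (r + q ^ K * j) = digitSum q r + j := by
  have hlt : r + q ^ K * j < q ^ (K + 1) :=
    calc r + q ^ K * j < q ^ K * (j + 1) := by linarith
      _ ≤ q ^ K * q := Nat.mul_le_mul_left _ hj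
      _ = q ^ (K + 1) := (pow_succ q K).symm
  rw [digitSum_eq_sum_range hq hlt, digitSum_eq_sum_range hq hr, sum_range_succ,
    Nat.add_pow_mul_div_pow_of_lt (by omega) hr, Nat.mod_eq_of_lt hj]
  exact congrArg (· + j) (sum_congr rfl fun t ht =>
    Nat.add_pow_mul_div_pow_mod_of_lt (by omega) (mem_range.mp ht) r j)

/-- For each digit position `t < K`, the `n_t` units `(t, j)`, `j < n_t`; the unit `(t, j)` is
given weight `q ^ t`. -/
def digitUnits (q n K : ℕ) : Finset (ℕ × ℕ) :=
  (range K).biUnion fun t => {t} ×ˢ range (n / q ^ t % q)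

theorem digitUnits_succ (q n K : ℕ) :
    digitUnits q n (K + 1) = {K} ×ˢ range (n / q ^ K % q) ∪ digitUnits q n K := by
  rw [digitUnits, range_add_one, biUnion_insert]
  rfl

theorem disjoint_digitUnits (q n K : ℕ) :
    Disjoint ({K} ×ˢ range (n / q ^ K % q)) (digitUnits q n K) := by
  simp only [disjoint_left, digitUnits, mem_product, mem_singleton, mem_biUnion, mem_range]
  rintro p ⟨hp, -⟩ ⟨t, ht, hpt, -⟩
  omega

theorem sum_pow_fst_of_subset_singleton_product {V : Finset (ℕ × ℕ)} {K d : ℕ}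
    (hV : V ⊆ {K} ×ˢ range d) :
    ∑ p ∈ V, q ^ p.1 = q ^ K * #V := by
  rw [sum_const_nat fun p hp => by rw [mem_singleton.mp (mem_product.mp (hV hp)).1], mul_comm]

theorem sum_digitUnits_pow (q n K : ℕ) : ∑ p ∈ digitUnits q n K, q ^ p.1 = n % q ^ K := by
  induction K with
  | zero => simp [digitUnits, Nat.mod_one]
  | succ K ih =>
    rw [digitUnits_succ, sum_union (disjoint_digitUnits q n K),
      sum_pow_fst_of_subset_singleton_product subset_rfl,
      ih, Nat.mod_pow_succ, card_product, card_singleton, card_range, one_mul, add_comm]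

theorem digitSum_sum_pow_of_subset_digitUnits (hq : 2 ≤ q) {n K : ℕ} {U : Finset (ℕ × ℕ)}
    (hU : U ⊆ digitUnits q n K) : digitSum q (∑ p ∈ U, q ^ p.1) = #U := by
  induction K generalizing U with
  | zero => simp_all [digitUnits, digitSum]
  | succ K ih =>
    rw [digitUnits_succ] at hU
    set C := {K} ×ˢ range (n / q ^ K % q)
    have hsplit : U = U ∩ digitUnits q n K ∪ U ∩ C := by
      rw [← inter_union_distrib_left, union_comm, inter_eq_left.mpr hU]
    have hdisj : Disjoint (U ∩ digitUnits q n K) (U ∩ C) :=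
      (disjoint_digitUnits q n K).symm.mono inter_subset_right inter_subset_right
    have hlow : ∑ p ∈ U ∩ digitUnits q n K, q ^ p.1 < q ^ K :=
      calc _ ≤ ∑ p ∈ digitUnits q n K, q ^ p.1 := sum_le_sum_of_subset inter_subset_right
        _ < q ^ K := by rw [sum_digitUnits_pow]; exact Nat.mod_lt _ (by positivity)
    have htop : #(U ∩ C) < q :=
      calc #(U ∩ C) ≤ #C := card_le_card inter_subset_right
        _ < q := by simpa [C] using Nat.mod_lt _ (by omega)
    rw [hsplit, sum_union hdisj, card_union_of_disjoint hdisj,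
      sum_pow_fst_of_subset_singleton_product inter_subset_right, digitSum_add_pow_mul hq hlow htop,
      ih inter_subset_right]

theorem sum_powerset_digitUnits_eq_sum_range_pow {M : Type*} [AddCommMonoid M] (hq : 2 ≤ q)
    (n K : ℕ) (h : ℕ → M) :
    ∑ T ∈ (digitUnits q n K).powerset, h (∑ p ∈ T, q ^ p.1) =
      ∑ m ∈ range (q ^ K), (∏ t ∈ range K, (n / q ^ t % q).choose (m / q ^ t % q)) • h m := by
  induction K generalizing h with
  | zero => simp [digitUnits]
  | succ K ih =>
    set d := n / q ^ K % q
    have hd : d < q := Nat.mod_lt _ (by omega)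
    have hcol : ∀ V ∈ ({K} ×ˢ range d).powerset,
        ∑ U ∈ (digitUnits q n K).powerset, h (∑ p ∈ V ∪ U, q ^ p.1) =
          ∑ r ∈ range (q ^ K), (∏ t ∈ range K, (n / q ^ t % q).choose (r / q ^ t % q)) •
            h (r + q ^ K * #V) := by
      intro V hV
      rw [← ih]
      refine sum_congr rfl fun U hU => ?_
      rw [sum_union ((disjoint_digitUnits q n K).mono (mem_powerset.mp hV) (mem_powerset.mp hU)),
        sum_pow_fst_of_subset_singleton_product (mem_powerset.mp hV), add_comm]
    -- split off the units at position `K`, count their subsets by size `j < q`, and match the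
    -- pair `(r, j)` with `m = r + q ^ K * j`, whose top digit is `j`
    rw [digitUnits_succ, sum_powerset_union_of_disjoint (disjoint_digitUnits q n K),
      sum_congr rfl hcol, sum_powerset_apply_card (fun j => ∑ r ∈ range (q ^ K),
        (∏ t ∈ range K, (n / q ^ t % q).choose (r / q ^ t % q)) • h (r + q ^ K * j)),
      card_product, card_singleton, card_range, one_mul,
      sum_subset (range_subset_range.mpr hd) fun j _ hj => by
        rw [Nat.choose_eq_zero_of_lt (by simpa using hj), zero_smul],
      pow_succ, sum_range_mul]
    refine sum_congr rfl fun j hj => ?_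
    rw [smul_sum]
    refine sum_congr rfl fun r hr => ?_
    rw [prod_range_succ, Nat.add_pow_mul_div_pow_of_lt (by omega) (mem_range.mp hr),
      Nat.mod_eq_of_lt (mem_range.mp hj), smul_smul, mul_comm]
    congr 2
    exact prod_congr rfl fun t ht => by
      rw [Nat.add_pow_mul_div_pow_mod_of_lt (by omega) (mem_range.mp ht)]

theorem prod_choose_div_pow_mod_eq_zero {n m K : ℕ} (hm : m < q ^ K) (hnm : n < m) :
    ∏ t ∈ range K, (n / q ^ t % q).choose (m / q ^ t % q) = 0 := by
  by_contra hne
  have hle : ∀ t ∈ range K, m / q ^ t % q ≤ n / q ^ t % q := fun t ht => by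
    by_contra hlt
    exact hne (prod_eq_zero ht (Nat.choose_eq_zero_of_lt (by omega)))
  have : m ≤ n :=
    calc m = ∑ t ∈ range K, m / q ^ t % q * q ^ t := by
          rw [Nat.sum_range_div_pow_mod_mul_pow, Nat.mod_eq_of_lt hm]
      _ ≤ ∑ t ∈ range K, n / q ^ t % q * q ^ t :=
          sum_le_sum fun t ht => Nat.mul_le_mul_right _ (hle t ht)
      _ ≤ n := by rw [Nat.sum_range_div_pow_mod_mul_pow]; exact Nat.mod_le _ _
  omega

theorem Cq_eq_prod_range (hq : 2 ≤ q) {n m : ℕ} (hmn : m ≤ n) :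
    Cq q n m = ∏ t ∈ range (n + 1), (n / q ^ t % q).choose (m / q ^ t % q) := by
  refine (prod_subset (range_subset_range.mpr (by omega)) fun t _ ht => ?_).symm
  have hnt : n < q ^ t := (Nat.lt_pow_succ_self hq n).trans_le
    (Nat.pow_le_pow_right (by omega) (by simpa using ht))
  rw [Nat.div_eq_of_lt hnt, Nat.div_eq_of_lt (hmn.trans_lt hnt), Nat.zero_mod, Nat.choose_self]

theorem sum_powerset_digitUnits_eq_sum_Cq {M : Type*} [AddCommMonoid M] (hq : 2 ≤ q) (n : ℕ)
    (h : ℕ → M) :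
    ∑ T ∈ (digitUnits q n (n + 1)).powerset, h (∑ p ∈ T, q ^ p.1) =
      ∑ m ∈ range (n + 1), Cq q n m • h m := by
  rw [sum_powerset_digitUnits_eq_sum_range_pow hq, ← sum_subset
    (range_subset_range.mpr (Nat.lt_pow_succ_self hq n)) fun m hm hmn => by
      rw [prod_choose_div_pow_mod_eq_zero (mem_range.mp hm) (by simpa using hmn), zero_smul]]
  exact sum_congr rfl fun m hm => by rw [Cq_eq_prod_range hq (by simpa [Nat.lt_succ_iff] using hm)]

theorem abelA_eq_Afun (hq : 2 ≤ q) {n K : ℕ} {U : Finset (ℕ × ℕ)} (hU : U ⊆ digitUnits q n K)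
    (x : ℝ) : abelA (fun p => (q : ℝ) ^ p.1) x U = Afun q x (∑ p ∈ U, q ^ p.1) := by
  have hzero : ∑ p ∈ U, q ^ p.1 = 0 ↔ U = ∅ := by
    simp [sum_eq_zero_iff, eq_empty_iff_forall_notMem, show q ≠ 0 by omega]
  rw [abelA, Afun, digitSum_sum_pow_of_subset_digitUnits hq hU]
  push_cast
  simp only [hzero]

end DigitUnits

/-- The fractal analog of the generalized binomial Abel formula:
`(φ+β)·(φ+β+n)^{{n}−1} = Σ_{m=0}^n C_q(n,m)·A_φ(m)·A_β(n−m)`. -/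
theorem stmt17 (q : ℕ) (hq : 2 ≤ q) (n : ℕ) (hn : 1 ≤ n) (φ β : ℝ) :
    (φ + β) * (φ + β + n) ^ (digitSum q n - 1) =
      ∑ m ∈ Finset.range (n + 1), (Cq q n m : ℝ) * Afun q φ m * Afun q β (n - m) := by
  set s := digitUnits q n (n + 1)
  have hs : ∑ p ∈ s, q ^ p.1 = n := by
    rw [sum_digitUnits_pow, Nat.mod_eq_of_lt (Nat.lt_pow_succ_self hq n)]
  have hne : s.Nonempty := nonempty_iff_ne_empty.mpr fun h => by rw [h, sum_empty] at hs; omega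
  have hsR : ∑ p ∈ s, (q : ℝ) ^ p.1 = n := by exact_mod_cast hs
  have hcard : #s = digitSum q n := by
    rw [← digitSum_sum_pow_of_subset_digitUnits hq subset_rfl, hs]
  have hsdiff : ∀ T ∈ s.powerset, ∑ p ∈ s \ T, q ^ p.1 = n - ∑ p ∈ T, q ^ p.1 := fun T hT => by
    have := sum_sdiff (f := fun p => q ^ p.1) (mem_powerset.mp hT)
    omega
  calc (φ + β) * (φ + β + n) ^ (digitSum q n - 1)
      = ∑ T ∈ s.powerset, abelA (fun p => (q : ℝ) ^ p.1) φ T *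
          abelA (fun p => (q : ℝ) ^ p.1) β (s \ T) := by
        rw [sum_abelA_mul_abelA _ hne, hsR, hcard]
    _ = ∑ T ∈ s.powerset, Afun q φ (∑ p ∈ T, q ^ p.1) * Afun q β (n - ∑ p ∈ T, q ^ p.1) :=
        sum_congr rfl fun T hT => by
          rw [abelA_eq_Afun hq (mem_powerset.mp hT), abelA_eq_Afun hq sdiff_subset, hsdiff T hT]
    _ = _ := by
        rw [sum_powerset_digitUnits_eq_sum_Cq hq n fun m => Afun q φ m * Afun q β (n - m)]
        simp only [nsmul_eq_mul, mul_assoc]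
end
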